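/- The iteratively reweighted least squares update for ℓ_p regression is monotonically non-increasing: if β^{(t+1)} minimizes Σ_i w_i^{(t)} (y_i - ⟨x_i, β⟩)² with weights w_i^{(t)} = |y_i - ⟨x_i, β^{(t)}⟩|^{p-2}, and all residuals y_i - ⟨x_i, β^{(t)}⟩ are nonzero, then Σ_i |y_i - ⟨x_i, β^{(t+1)}⟩|^p ≤ Σ_i |y_i - ⟨x_i, β^{(t)}⟩|^p for p ∈ (0, 2). -/

import Mathlib

open RealInnerProductSpace Finset

lemma irls_major {p : ℝ} (hp0 : 0 < p) (hp2 : p < 2) (a r : ℝ) (ha : a ≠ 0) :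
    |r| ^ p ≤ p / 2 * |a| ^ (p - 2) * r ^ 2 + (1 - p / 2) * |a| ^ p := by
  have hA : (0:ℝ) < |a| := abs_pos.2 ha
  have hsq : ∀ b : ℝ, ((b ^ 2 : ℝ)) ^ (p / 2) = |b| ^ p := by
    intro b
    rw [← sq_abs, ← Real.rpow_natCast |b| 2, ← Real.rpow_mul (abs_nonneg b)]
    congr 1; ring
  have hu : (-1:ℝ) ≤ r ^ 2 / a ^ 2 - 1 := by
    have : 0 ≤ r ^ 2 / a ^ 2 := by positivity
    linarith
  have key := rpow_one_add_le_one_add_mul_self hu (p := p / 2)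
    (by linarith) (by linarith)
  have key' : (r ^ 2 / a ^ 2) ^ (p / 2) ≤ 1 + p / 2 * (r ^ 2 / a ^ 2 - 1) := by
    simpa using key
  have h1 : (r ^ 2 / a ^ 2) ^ (p / 2) * |a| ^ p = |r| ^ p := by
    rw [← div_pow, hsq, abs_div, Real.div_rpow (abs_nonneg r) (abs_nonneg a)]
    field_simp
  have h2 : |a| ^ (p - 2) * r ^ 2 = (r ^ 2 / a ^ 2) * |a| ^ p := by
    rw [Real.rpow_sub hA, Real.rpow_two, sq_abs]
    field_simp
  have hApow : (0:ℝ) < |a| ^ p := Real.rpow_pos_of_pos hA p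
  nlinarith [mul_le_mul_of_nonneg_right key' hApow.le]

/-- Monotonicity of the IRLS update for ℓ_p regression: if all residuals at
`βt` are nonzero, weights are `w_i = |y_i - ⟨x_i, βt⟩|^(p-2)`, and `βt1`
minimizes the weighted quadratic objective, then the ℓ_p loss does not
increase, for `p ∈ (0,2)`. -/
theorem irls_monotone (d n : ℕ) (p : ℝ) (hp0 : 0 < p) (hp2 : p < 2)
    (x : Fin n → EuclideanSpace ℝ (Fin d)) (y : Fin n → ℝ)
    (βt βt1 : EuclideanSpace ℝ (Fin d))
    (hres : ∀ i, y i - ⟪x i, βt⟫ ≠ 0)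
    (w : Fin n → ℝ) (hw : ∀ i, w i = |y i - ⟪x i, βt⟫| ^ (p - 2))
    (hmin : ∀ β : EuclideanSpace ℝ (Fin d),
      ∑ i, w i * (y i - ⟪x i, βt1⟫) ^ 2 ≤ ∑ i, w i * (y i - ⟪x i, β⟫) ^ 2) :
    ∑ i, |y i - ⟪x i, βt1⟫| ^ p ≤ ∑ i, |y i - ⟪x i, βt⟫| ^ p := by
  have hwr : ∀ i, w i * (y i - ⟪x i, βt⟫) ^ 2 = |y i - ⟪x i, βt⟫| ^ p := by
    intro i
    rw [hw i, ← sq_abs, ← Real.rpow_natCast |y i - ⟪x i, βt⟫| 2,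
      ← Real.rpow_add (abs_pos.2 (hres i))]
    congr 1; push_cast; ring
  calc ∑ i, |y i - ⟪x i, βt1⟫| ^ p
      ≤ ∑ i, (p / 2 * (w i * (y i - ⟪x i, βt1⟫) ^ 2)
          + (1 - p / 2) * |y i - ⟪x i, βt⟫| ^ p) := by
        apply Finset.sum_le_sum
        intro i _
        have h := irls_major hp0 hp2 (y i - ⟪x i, βt⟫) (y i - ⟪x i, βt1⟫) (hres i)
        rw [hw i]
        linarith
    _ = p / 2 * (∑ i, w i * (y i - ⟪x i, βt1⟫) ^ 2)
          + ∑ i, (1 - p / 2) * |y i - ⟪x i, βt⟫| ^ p := by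
        rw [Finset.sum_add_distrib, Finset.mul_sum]
    _ ≤ p / 2 * (∑ i, w i * (y i - ⟪x i, βt⟫) ^ 2)
          + ∑ i, (1 - p / 2) * |y i - ⟪x i, βt⟫| ^ p :=
        add_le_add_left (mul_le_mul_of_nonneg_left (hmin βt) (by linarith)) _
    _ = ∑ i, |y i - ⟪x i, βt⟫| ^ p := by
        rw [Finset.mul_sum, ← Finset.sum_add_distrib]
        refine Finset.sum_congr rfl fun i _ => ?_
        rw [hwr i]; ring
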